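/- arXiv:1804.09060 — 2 statements merged into one kernel-verified Lean document; each statement's English description precedes it below -/
import Mathlib

section
/- Let P and Q be probability measures on a measurable space Ω and let F : Ω → ℝ be a measurable function that is integrable with respect to P and such that ∫ exp(F) dQ < ∞. Then ∫ F dP − log ∫ exp(F) dQ ≤ KL(P‖Q). -/
open MeasureTheory Real
open scoped ENNReal NNReal Classical

/-- The Kullback–Leibler divergence `KL(μ‖ν)`: it equals `∫ log (dμ/dν) dμ` when `μ ≪ ν`
and the log-likelihood ratio is `μ`-integrable, and `+∞` otherwise.  (For probability
measures the integral is nonnegative, so we may take values in `ℝ≥0∞`.) -/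

noncomputable def klDiv {Ω : Type*} [MeasurableSpace Ω] (μ ν : Measure Ω) : ℝ≥0∞ :=
  if μ ≪ ν ∧ Integrable (llr μ ν) μ then ENNReal.ofReal (∫ x, llr μ ν x ∂μ) else ⊤

lemma aux_integral_llr_nonneg {Ω : Type*} [MeasurableSpace Ω] (μ ν : Measure Ω)
    [IsProbabilityMeasure μ] [IsProbabilityMeasure ν] (hμν : μ ≪ ν)
    (h_int : Integrable (llr μ ν) μ) : 0 ≤ ∫ x, llr μ ν x ∂μ := by
  have h_eq : llr μ ν =ᵐ[μ] fun x => -Real.log ((ν.rnDeriv μ x).toReal) := by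
    filter_upwards [neg_llr hμν] with x hx
    have : -llr μ ν x = llr ν μ x := hx
    rw [← neg_neg (llr μ ν x), this]; rfl
  have h_pos : ∀ᵐ x ∂μ, 0 < ν.rnDeriv μ x := Measure.rnDeriv_pos' hμν
  have h_lt : ∀ᵐ x ∂μ, ν.rnDeriv μ x < ∞ := Measure.rnDeriv_lt_top ν μ
  have h_int2 : Integrable (fun x => 1 - (ν.rnDeriv μ x).toReal) μ :=
    (integrable_const 1).sub (Measure.integrable_toReal_rnDeriv)
  have h_mono : ∫ x, (1 - (ν.rnDeriv μ x).toReal) ∂μ ≤ ∫ x, llr μ ν x ∂μ := by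
    refine integral_mono_ae h_int2 h_int ?_
    filter_upwards [h_eq, h_pos, h_lt] with x hx hx_pos hx_lt
    rw [hx]
    have ht : 0 < (ν.rnDeriv μ x).toReal := ENNReal.toReal_pos hx_pos.ne' hx_lt.ne
    nlinarith [Real.log_le_sub_one_of_pos ht]
  have h_le : ∫ x, (ν.rnDeriv μ x).toReal ∂μ ≤ 1 := by
    have := Measure.setIntegral_toReal_rnDeriv_le (μ := ν) (ν := μ)
      (s := Set.univ) (measure_ne_top ν _)
    simpa using this
  have : ∫ x, (1 - (ν.rnDeriv μ x).toReal) ∂μ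
      = 1 - ∫ x, (ν.rnDeriv μ x).toReal ∂μ := by
    rw [integral_sub (integrable_const 1) Measure.integrable_toReal_rnDeriv]
    simp
  linarith [h_mono, h_le, this ▸ h_mono]

/-- **Donsker–Varadhan lower bound (the paper's Lemma 5).**  For probability measures `P, Q`
on `Ω` and a measurable `F : Ω → ℝ` which is `P`-integrable and whose exponential is
`Q`-integrable, `∫ F dP − log ∫ exp F dQ ≤ KL(P‖Q)`. -/
theorem donsker_varadhan_lower_bound
    {Ω : Type*} [MeasurableSpace Ω] (P Q : Measure Ω)
    [IsProbabilityMeasure P] [IsProbabilityMeasure Q]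
    (F : Ω → ℝ) (hF : Measurable F)
    (hFP : Integrable F P) (hFQ : Integrable (fun x => Real.exp (F x)) Q) :
    ENNReal.ofReal (∫ x, F x ∂P - Real.log (∫ x, Real.exp (F x) ∂Q)) ≤ klDiv P Q := by
  rw [klDiv]
  split_ifs with h
  · obtain ⟨hPQ, h_int⟩ := h
    refine ENNReal.ofReal_le_ofReal ?_
    have hQ' : IsProbabilityMeasure (Q.tilted F) := isProbabilityMeasure_tilted hFQ
    have hPQ' : P ≪ Q.tilted F := hPQ.trans (absolutelyContinuous_tilted hFQ)
    have h_int' : Integrable (llr P (Q.tilted F)) P :=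
      integrable_llr_tilted_right hPQ hFP h_int hFQ
    have h0 := aux_integral_llr_nonneg P (Q.tilted F) hPQ' h_int'
    rw [integral_llr_tilted_right hPQ hFP hFQ h_int] at h0
    linarith
  · exact le_top
end

section
/- Let D be a probability measure on 𝒵, let K be a Markov kernel from 𝒵^n (= Fin n → 𝒵) to 𝒲, and let ℓ : 𝒲 × 𝒵 → ℝ be bounded and measurable. For S = (Z_1, …, Z_n) with the Z_j i.i.d. with law D, W distributed as K(S), and for each i an independent fresh example Z_i' ~ D, let S^i denote S with its i-th coordinate replaced by Z_i'. Define R(w) = ∫ ℓ(w, z) dD(z) and R_S(w) = (1/n) Σ_j ℓ(w, S j). Then E_{S, W~K(S)}[R(W) − R_S(W)] = (1/n) Σ_{i=1}^{n} E_{S, Z_i'} [ ∫ ℓ(w, Z_i') dK(S)(w) − ∫ ℓ(w, Z_i') dK(S^i)(w) ]. -/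
open MeasureTheory ProbabilityTheory

/-! Writing `F(s, z) = ∫ ℓ(w, z) dK(s)(w)` for the loss averaged over the algorithm's output,
Fubini turns the expected generalization error into `E_S[∫ F(S, z) dD(z)] − (1/n) ∑ⱼ E_S[F(S, Sⱼ)]`.
In the `i`-th replace-one term, the sample `Sⁱ` is again distributed as `D^⊗n` and `Zᵢ'` is its
`i`-th coordinate, so `E[F(Sⁱ, Zᵢ')] = E_S[F(S, Sᵢ)]`, and the two sides agree term by term. -/

lemma MeasureTheory.StronglyMeasurable.integrable_of_abs_le {α : Type*} [MeasurableSpace α]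
    {μ : Measure α} [IsFiniteMeasure μ] {f : α → ℝ} (hf : StronglyMeasurable f) {C : ℝ}
    (hfC : ∀ x, |f x| ≤ C) : Integrable f μ :=
  .of_bound hf.aestronglyMeasurable C
    (ae_of_all _ fun x => (Real.norm_eq_abs _).trans_le (hfC x))

lemma MeasureTheory.abs_integral_le_of_abs_le {α : Type*} [MeasurableSpace α] {μ : Measure α}
    [IsProbabilityMeasure μ] {f : α → ℝ} {C : ℝ} (hfC : ∀ x, |f x| ≤ C) :
    |∫ x, f x ∂μ| ≤ C := by
  simpa using norm_integral_le_of_norm_le_const (μ := μ)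
    (ae_of_all _ fun x => (Real.norm_eq_abs _).trans_le (hfC x))

lemma ProbabilityTheory.Kernel.stronglyMeasurable_uncurry_integral {X 𝒲 𝒵 : Type*}
    [MeasurableSpace X] [MeasurableSpace 𝒲] [MeasurableSpace 𝒵] (K : Kernel X 𝒲)
    [IsSFiniteKernel K] {ℓ : 𝒲 × 𝒵 → ℝ} (hℓ : StronglyMeasurable ℓ) :
    StronglyMeasurable (Function.uncurry fun x z => ∫ w, ℓ (w, z) ∂K x) :=
  StronglyMeasurable.integral_kernel_prod_right' (κ := Kernel.prodMkRight 𝒵 K)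
    (hℓ.comp_measurable (measurable_snd.prodMk measurable_fst.snd))

lemma MeasureTheory.integral_integral_sub_mul_sum {X Y ι : Type*} [MeasurableSpace X]
    [MeasurableSpace Y] [Fintype ι] {μ : Measure X} {ν : Measure Y} [IsFiniteMeasure μ]
    [IsFiniteMeasure ν] {f : X → Y → ℝ} (hf : StronglyMeasurable (Function.uncurry f)) {C : ℝ}
    (hfC : ∀ x y, |f x y| ≤ C) {g : ι → X → Y} (hg : ∀ j, Measurable (g j)) (c : ℝ) :
    ∫ x, (∫ y, f x y ∂ν - c * ∑ j, f x (g j x)) ∂μ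
      = ∫ x, ∫ y, f x y ∂ν ∂μ - c * ∑ j, ∫ x, f x (g j x) ∂μ := by
  have hfg : ∀ j, Integrable (fun x => f x (g j x)) μ := fun j =>
    (hf.comp_measurable (measurable_id.prodMk (hg j))).integrable_of_abs_le fun _ => hfC _ _
  have hf_int : Integrable (fun x => ∫ y, f x y ∂ν) μ :=
    (hf.integrable_of_abs_le (μ := μ.prod ν) fun p => hfC p.1 p.2).integral_prod_left
  rw [integral_sub hf_int ((integrable_finsetSum _ fun j _ => hfg j).const_mul c),
    integral_const_mul, integral_finsetSum _ fun j _ => hfg j]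

section ReplaceOne

variable {ι : Type*} [Fintype ι] [DecidableEq ι] {α : ι → Type*} [∀ i, MeasurableSpace (α i)]

theorem MeasureTheory.measurePreserving_update_pi (μ : ∀ i, Measure (α i))
    [∀ i, SigmaFinite (μ i)] (i : ι) [IsProbabilityMeasure (μ i)] :
    MeasurePreserving (fun p : (∀ j, α j) × α i => Function.update p.1 i p.2)
      ((Measure.pi μ).prod (μ i)) (Measure.pi μ) := by
  refine ⟨measurable_update', (Measure.pi_eq fun A hA => ?_).symm⟩
  have hpre : (fun p : (∀ j, α j) × α i => Function.update p.1 i p.2) ⁻¹' Set.univ.pi A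
      = Set.univ.pi (Function.update A i Set.univ) ×ˢ A i := by
    ext ⟨s, z⟩
    simp only [Set.mem_preimage, Set.mem_prod, Set.mem_univ_pi]
    rw [Function.forall_update_iff s (fun j x => x ∈ A j),
      Function.forall_update_iff A (fun j t => s j ∈ t)]
    simp [and_comm]
  rw [Measure.map_apply measurable_update' (.univ_pi hA), hpre, Measure.prod_prod,
    Measure.pi_pi, Fintype.prod_eq_prod_compl_mul i, Fintype.prod_eq_prod_compl_mul i,
    Function.update_self, measure_univ, mul_one]
  exact congrArg (· * _) <| Finset.prod_congr rfl fun j hj =>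
    by rw [Function.update_of_ne (by simpa using hj)]

theorem MeasureTheory.integral_integral_update {E : Type*} [NormedAddCommGroup E]
    [NormedSpace ℝ E] (μ : ∀ i, Measure (α i)) [∀ i, SigmaFinite (μ i)] (i : ι)
    [IsProbabilityMeasure (μ i)] {G : (∀ j, α j) → E} (hG : Integrable G (Measure.pi μ)) :
    ∫ s, ∫ z, G (Function.update s i z) ∂μ i ∂Measure.pi μ = ∫ s, G s ∂Measure.pi μ := by
  have hmp := measurePreserving_update_pi μ i
  calc ∫ s, ∫ z, G (Function.update s i z) ∂μ i ∂Measure.pi μ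
      = ∫ p, G (Function.update p.1 i p.2) ∂(Measure.pi μ).prod (μ i) :=
        (integral_prod _ (hmp.integrable_comp_of_integrable hG)).symm
    _ = ∫ s, G s ∂Measure.pi μ := by
        rw [← integral_map hmp.measurable.aemeasurable
          (by rw [hmp.map_eq]; exact hG.aestronglyMeasurable), hmp.map_eq]

theorem MeasureTheory.integral_integral_sub_update (μ : ∀ i, Measure (α i))
    [∀ i, IsProbabilityMeasure (μ i)] (i : ι) {f : (∀ j, α j) → α i → ℝ}
    (hf : StronglyMeasurable (Function.uncurry f)) {C : ℝ} (hfC : ∀ s z, |f s z| ≤ C) :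
    ∫ s, ∫ z, (f s z - f (Function.update s i z) z) ∂μ i ∂Measure.pi μ
      = ∫ s, ∫ z, f s z ∂μ i ∂Measure.pi μ - ∫ s, f s (s i) ∂Measure.pi μ := by
  have hf_upd : StronglyMeasurable (Function.uncurry fun s z => f (Function.update s i z) z) :=
    hf.comp_measurable (measurable_update'.prodMk measurable_snd)
  have hf_diag : StronglyMeasurable fun s => f s (s i) :=
    hf.comp_measurable (measurable_id.prodMk (measurable_pi_apply i))
  have hsplit := integral_integral_sub
    (hf.integrable_of_abs_le (μ := (Measure.pi μ).prod (μ i)) fun p => hfC p.1 p.2)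
    (hf_upd.integrable_of_abs_le fun p => hfC _ _)
  have hswap := integral_integral_update μ i (hf_diag.integrable_of_abs_le fun s => hfC s (s i))
  simp only [Function.uncurry_apply_pair, Function.update_self] at hsplit hswap
  rw [hsplit, hswap]

end ReplaceOne

/-- **The replace-one identity (equation (eq1) in the paper's proof of Theorem 3).**
A randomized learning algorithm is a Markov kernel `K` from samples `S : Fin n → 𝒵` to
hypotheses `w : 𝒲`.  For an i.i.d. sample `S ~ D^⊗n`, a bounded measurable loss `ℓ`, expected
risk `R(w) = ∫ ℓ(w, z) dD(z)` and empirical risk `R_S(w) = (1/n) ∑ j, ℓ(w, S j)`, the expected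
generalization error `E_{S, W ~ K(S)}[R(W) − R_S(W)]` equals the average, over `i`, of the
expected difference `E_{S, Z_i'}[∫ ℓ(w, Z_i') dK(S)(w) − ∫ ℓ(w, Z_i') dK(S^i)(w)]`, where
`S^i` is `S` with its `i`-th coordinate replaced by an independent fresh example `Z_i' ~ D`. -/
theorem expected_generalization_error_eq_average_replace_one
    {𝒲 𝒵 : Type*} [MeasurableSpace 𝒲] [MeasurableSpace 𝒵]
    (D : Measure 𝒵) [IsProbabilityMeasure D]
    (n : ℕ) (hn : 0 < n)
    (K : Kernel (Fin n → 𝒵) 𝒲) [IsMarkovKernel K]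
    (ℓ : 𝒲 × 𝒵 → ℝ) (hℓmeas : Measurable ℓ)
    (hℓbdd : ∃ C : ℝ, ∀ p : 𝒲 × 𝒵, |ℓ p| ≤ C) :
    ∫ s, ∫ w, ((∫ z, ℓ (w, z) ∂D) - (1 / (n : ℝ)) * ∑ j : Fin n, ℓ (w, s j))
        ∂(K s) ∂(Measure.pi (fun _ : Fin n => D))
      = (1 / (n : ℝ)) * ∑ i : Fin n,
          ∫ s, ∫ z', ((∫ w, ℓ (w, z') ∂(K s)) - ∫ w, ℓ (w, z') ∂(K (Function.update s i z')))
            ∂D ∂(Measure.pi (fun _ : Fin n => D)) := by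
  obtain ⟨C, hC⟩ := hℓbdd
  have hℓ : StronglyMeasurable ℓ := hℓmeas.stronglyMeasurable
  have hF := K.stronglyMeasurable_uncurry_integral hℓ
  have hFC : ∀ s z, |∫ w, ℓ (w, z) ∂K s| ≤ C := fun _ z =>
    abs_integral_le_of_abs_le fun w => hC (w, z)
  have hrisk : ∀ s : Fin n → 𝒵,
      ∫ w, ((∫ z, ℓ (w, z) ∂D) - (1 / (n : ℝ)) * ∑ j : Fin n, ℓ (w, s j)) ∂K s
        = ∫ z, ∫ w, ℓ (w, z) ∂K s ∂D - (1 / (n : ℝ)) * ∑ j : Fin n, ∫ w, ℓ (w, s j) ∂K s := by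
    intro s
    rw [integral_integral_sub_mul_sum (f := fun w z => ℓ (w, z)) hℓ (fun w z => hC (w, z))
      (g := fun j _ => s j) (fun _ => measurable_const),
      integral_integral_swap (f := fun w z => ℓ (w, z)) (hℓ.integrable_of_abs_le hC)]
  rw [integral_congr_ae (ae_of_all _ hrisk),
    integral_integral_sub_mul_sum hF hFC (g := fun j s => s j) measurable_pi_apply]
  simp_rw [integral_integral_sub_update (fun _ => D) _ hF hFC]
  have hn' : (n : ℝ) ≠ 0 := by exact_mod_cast hn.ne'
  rw [Finset.sum_sub_distrib, Finset.sum_const, Finset.card_univ, Fintype.card_fin, nsmul_eq_mul,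
    mul_sub, ← mul_assoc, one_div_mul_cancel hn', one_mul]
end
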